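/- arXiv:2008.10597 — 9 statements merged into one kernel-verified Lean document; each statement's English description precedes it below -/
import Mathlib

section
/- (Bethe equations from the QQ-relation.) Suppose Q, Qbar, P : ℂ → ℂ satisfy the QQ-relation Q^{[1]}(z)·Qbar^{[-1]}(z) − Qbar^{[1]}(z)·Q^{[-1]}(z) = P(z) for all z ∈ ℂ. Then at every zero z0 of Q one has P^{[1]}(z0)·Q^{[-2]}(z0) + P^{[-1]}(z0)·Q^{[2]}(z0) = 0. In particular, if moreover P^{[-1]}(z0) ≠ 0 and Q^{[2]}(z0) ≠ 0, then the Bethe-equation form (P^{[1]}(z0)·Q^{[-2]}(z0)) / (P^{[-1]}(z0)·Q^{[2]}(z0)) = −1 holds. -/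
/-- **Bethe equations from the QQ-relation.**
Fix a nonzero step `η ∈ ℂ` and write `f^{[n]}(z) := f(z + n·η/2)`.
Suppose `Q, Qbar, P : ℂ → ℂ` satisfy the QQ-relation
`Q^{[1]}(z)·Qbar^{[-1]}(z) − Qbar^{[1]}(z)·Q^{[-1]}(z) = P(z)` for all `z`.  Then at every
zero `z₀` of `Q` one has `P^{[1]}(z₀)·Q^{[-2]}(z₀) + P^{[-1]}(z₀)·Q^{[2]}(z₀) = 0`; in
particular, if moreover `P^{[-1]}(z₀) ≠ 0` and `Q^{[2]}(z₀) ≠ 0`, then the Bethe-equation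
form `(P^{[1]}(z₀)·Q^{[-2]}(z₀)) / (P^{[-1]}(z₀)·Q^{[2]}(z₀)) = −1` holds. -/
theorem bethe_from_QQ
    (η : ℂ) (hη : η ≠ 0) (Q Qbar P : ℂ → ℂ)
    (hQQ : ∀ z : ℂ,
      Q (z + η / 2) * Qbar (z - η / 2) - Qbar (z + η / 2) * Q (z - η / 2) = P z)
    (z₀ : ℂ) (hz₀ : Q z₀ = 0) :
    P (z₀ + η / 2) * Q (z₀ - η) + P (z₀ - η / 2) * Q (z₀ + η) = 0 ∧
    (P (z₀ - η / 2) ≠ 0 → Q (z₀ + η) ≠ 0 →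
      (P (z₀ + η / 2) * Q (z₀ - η)) / (P (z₀ - η / 2) * Q (z₀ + η)) = -1) := by
  have h1 := hQQ (z₀ + η / 2)
  have h2 := hQQ (z₀ - η / 2)
  have e1 : z₀ + η / 2 + η / 2 = z₀ + η := by ring
  have e2 : z₀ + η / 2 - η / 2 = z₀ := by ring
  have e3 : z₀ - η / 2 + η / 2 = z₀ := by ring
  have e4 : z₀ - η / 2 - η / 2 = z₀ - η := by ring
  rw [e1, e2] at h1
  rw [e3, e4] at h2
  have key : P (z₀ + η / 2) * Q (z₀ - η) + P (z₀ - η / 2) * Q (z₀ + η) = 0 := by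
    rw [← h1, ← h2, hz₀]; ring
  refine ⟨key, fun hP hQ => ?_⟩
  have hne : P (z₀ - η / 2) * Q (z₀ + η) ≠ 0 := mul_ne_zero hP hQ
  rw [div_eq_iff hne]
  linear_combination key
end

section
/- (Lemma 2.1, bipartite Coxeter element.) Let Γ be a finite bipartite simple graph with parts O and E, with adjacency matrix I, and suppose μ ∈ ℂ^V and q ∈ ℂ, q ≠ 0, satisfy I·μ = (q + q^{−1})·μ. Set Λ := Σ_{a∈E} μ_a e_a + q·Σ_{a∈O} μ_a e_a. Then (s_O ∘ s_E)(Λ) = q²·Λ, where s_O is the composition of the reflections s_a over a ∈ O and s_E the composition over a ∈ E (these compositions are well defined since s_a and s_b commute for non-adjacent a, b). -/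
/-!
Each part is an independent set, so the reflections over one part commute and act coordinatewise:
`s_E` replaces `Λ_a` for `a ∈ E` by `(IΛ)_a - Λ_a`, which only reads the `O`-coordinates
`q μ_b`, giving `q (q + q⁻¹) μ_a - μ_a = q² μ_a`. Then `s_O` replaces `q μ_a` for `a ∈ O` by
`q² (q + q⁻¹) μ_a - q μ_a = q³ μ_a`, reading only the new `E`-coordinates `q² μ_b`.
-/

open Finset

/-- The reflection `s_a` on `ℂ^V` attached to a vertex `a` of a simple graph `G`:
it sends the basis vector `e_a` to `−e_a` and `e_b` to `e_b + I_{ab}·e_a` for `b ≠ a`,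
where `I` is the adjacency matrix.  In coordinates, `(s_a v)_c = v_c` for `c ≠ a` and
`(s_a v)_a = (∑_b I_{ab} v_b) − v_a`. -/
noncomputable def sRef {V : Type*} [Fintype V] [DecidableEq V]
    (G : SimpleGraph V) [DecidableRel G.Adj] (a : V) (v : V → ℂ) : V → ℂ :=
  fun c => if c = a then (∑ b, if G.Adj a b then v b else 0) - v a else v c

/-- The composition `s_{a₁} ∘ s_{a₂} ∘ … ∘ s_{aₙ}` of reflections along a list
`L = [a₁, …, aₙ]` of vertices (the reflection at the last entry is applied first). -/
noncomputable def compList {V : Type*} [Fintype V] [DecidableEq V]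
    (G : SimpleGraph V) [DecidableRel G.Adj] (L : List V) (v : V → ℂ) : V → ℂ :=
  L.foldr (fun a w => sRef G a w) v

namespace SimpleGraph

variable {V : Type*} {G : SimpleGraph V}

theorem IsBipartiteWith.not_adj_of_mem {s t : Set V} {v w : V} (h : G.IsBipartiteWith s t)
    (hv : v ∈ s) (hw : w ∈ s) : ¬G.Adj v w :=
  fun hadj => Set.disjoint_left.mp h.disjoint hw (h.mem_of_mem_adj hv hadj)

end SimpleGraph

section Reflections

variable {V : Type*} [Fintype V] {G : SimpleGraph V} [DecidableRel G.Adj]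

variable (G) in
/-- The coordinate `(I v)_a` of the product of the adjacency matrix with `v`. -/
noncomputable def adjSum (v : V → ℂ) (a : V) : ℂ :=
  ∑ b, if G.Adj a b then v b else 0

theorem adjSum_eq_mul_of_adj {v w : V → ℂ} {a : V} (k : ℂ)
    (h : ∀ b, G.Adj a b → v b = k * w b) : adjSum G v a = k * adjSum G w a := by
  rw [adjSum, adjSum, Finset.mul_sum]
  refine Finset.sum_congr rfl fun b _ => ?_
  split_ifs with hab
  exacts [h b hab, (mul_zero k).symm]

theorem adjSum_congr {v w : V → ℂ} {a : V} (h : ∀ b, G.Adj a b → v b = w b) :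
    adjSum G v a = adjSum G w a := by
  simpa using adjSum_eq_mul_of_adj 1 (by simpa using h)

variable [DecidableEq V]

theorem sRef_apply (a : V) (v : V → ℂ) (c : V) :
    sRef G a v c = if c = a then adjSum G v a - v a else v c :=
  rfl

theorem compList_apply_of_independent {L : List V} (hnd : L.Nodup)
    (hL : ∀ a ∈ L, ∀ b ∈ L, ¬G.Adj a b) (v : V → ℂ) (c : V) :
    compList G L v c = if c ∈ L then adjSum G v c - v c else v c := by
  induction L generalizing c with
  | nil => rfl
  | cons a L ih =>
    obtain ⟨haL, hndL⟩ := List.nodup_cons.mp hnd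
    have ih' := ih hndL fun x hx y hy => hL x (.tail a hx) y (.tail a hy)
    change sRef G a (compList G L v) c = _
    rw [sRef_apply]
    by_cases hca : c = a
    · subst hca
      have hnbr : ∀ b, G.Adj c b → compList G L v b = v b := fun b hcb => by
        rw [ih', if_neg fun hb : b ∈ L => hL c List.mem_cons_self b (.tail c hb) hcb]
      simp [adjSum_congr hnbr, ih', haL]
    · simp [hca, ih']

end Reflections

/-- **Lemma 2.1, bipartite Coxeter element.**
Let `Γ` be a finite bipartite simple graph with parts `O` and `E` and adjacency matrix `I`,
and suppose `μ ∈ ℂ^V` and `q ≠ 0` satisfy `I·μ = (q + q⁻¹)·μ`.  Set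
`Λ := ∑_{a∈E} μ_a e_a + q·∑_{a∈O} μ_a e_a`.  Then `(s_O ∘ s_E)(Λ) = q²·Λ`, where `s_O` is
the composition of the reflections `s_a` over `a ∈ O` (in any order — the order is
immaterial since `s_a` and `s_b` commute for non-adjacent `a`, `b`) and `s_E` is the
composition over `a ∈ E`. -/
theorem bipartite_coxeter_eigenvector {V : Type*} [Fintype V] [DecidableEq V]
    (G : SimpleGraph V) [DecidableRel G.Adj]
    (O E : Finset V) (hdisj : Disjoint O E) (hcover : ∀ v : V, v ∈ O ∨ v ∈ E)
    (hbip : ∀ a b : V, G.Adj a b → (a ∈ O ∧ b ∈ E) ∨ (a ∈ E ∧ b ∈ O))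
    (μ : V → ℂ) (q : ℂ) (hq : q ≠ 0)
    (heig : ∀ a : V, (∑ b, if G.Adj a b then μ b else 0) = (q + q⁻¹) * μ a)
    (Λ : V → ℂ) (hΛ : ∀ a : V, Λ a = if a ∈ O then q * μ a else μ a)
    (LO LE : List V) (hLOnd : LO.Nodup) (hLEnd : LE.Nodup)
    (hLO : ∀ x : V, x ∈ LO ↔ x ∈ O) (hLE : ∀ x : V, x ∈ LE ↔ x ∈ E) :
    compList G LO (compList G LE Λ) = fun a => q ^ 2 * Λ a := by
  have hG : G.IsBipartiteWith O E := ⟨Finset.disjoint_coe.mpr hdisj, hbip⟩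
  have heig : ∀ a, adjSum G μ a = (q + q⁻¹) * μ a := heig
  have hsE : ∀ c, compList G LE Λ c = if c ∈ O then q * μ c else q ^ 2 * μ c := by
    intro c
    rw [compList_apply_of_independent hLEnd fun a ha b hb =>
      hG.symm.not_adj_of_mem ((hLE a).1 ha) ((hLE b).1 hb)]
    by_cases hcE : c ∈ E
    · have hcO : c ∉ O := Finset.disjoint_right.mp hdisj hcE
      have hnbr : adjSum G Λ c = q * adjSum G μ c := adjSum_eq_mul_of_adj q fun b hcb => by
        rw [hΛ, if_pos (Finset.mem_coe.mp (hG.mem_of_mem_adj' hcE hcb.symm))]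
      rw [if_pos ((hLE c).2 hcE), if_neg hcO, hnbr, heig, hΛ, if_neg hcO]
      field_simp
      ring
    · have hcO : c ∈ O := (hcover c).resolve_right hcE
      rw [if_neg (mt (hLE c).1 hcE), hΛ, if_pos hcO, if_pos hcO]
  funext c
  rw [compList_apply_of_independent hLOnd fun a ha b hb =>
    hG.not_adj_of_mem ((hLO a).1 ha) ((hLO b).1 hb), hsE, hΛ]
  by_cases hcO : c ∈ O
  · have hnbr : adjSum G (compList G LE Λ) c = q ^ 2 * adjSum G μ c :=
      adjSum_eq_mul_of_adj _ fun b hcb => by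
        rw [hsE, if_neg (Finset.disjoint_right.mp hdisj
          (Finset.mem_coe.mp (hG.mem_of_mem_adj hcO hcb)))]
    rw [if_pos ((hLO c).2 hcO), if_pos hcO, if_pos hcO, hnbr, heig]
    field_simp
    ring
  · rw [if_neg (mt (hLO c).1 hcO), if_neg hcO, if_neg hcO]
end

section
/- (Lemma 2.3, eigenvector of the Coxeter element attached to any height function.) Let Γ be a finite simple graph admitting a height function p, let μ ∈ ℂ^V and q ∈ ℂ, q ≠ 0, satisfy I·μ = (q + q^{−1})·μ, and set Λ[p] := Σ_{a∈V} q^{p_a} μ_a e_a. Let a_1, …, a_n be any enumeration of V with p_{a_1} ≥ p_{a_2} ≥ … ≥ p_{a_n}. Then (s_{a_1} ∘ s_{a_2} ∘ … ∘ s_{a_n})(Λ[p]) = q²·Λ[p] (the composition applies s_{a_n} first). -/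
/-!
The reflections are applied from the lowest vertex upwards. When `s_a` is reached, a neighbour
`b` of `a` has already been reflected exactly when `p_b = p_a - 1`, so its coordinate is
`q² · q^(p_a - 1) μ_b`; otherwise it is still `q^(p_a + 1) μ_b`. Either way all neighbours carry
the weight `q^(p_a + 1)`, and the eigenvalue equation gives
`(s_a w)_a = q^(p_a + 1) (q + q⁻¹) μ_a - q^(p_a) μ_a = q² · q^(p_a) μ_a`.
-/

open Finset

section

variable {V : Type*} [Fintype V] (G : SimpleGraph V) [DecidableRel G.Adj]

theorem sum_adj_eq_mul_of_forall_adj {a : V} {w μ : V → ℂ} {t : ℂ}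
    (h : ∀ b, G.Adj a b → w b = t * μ b) :
    (∑ b, if G.Adj a b then w b else 0) = t * ∑ b, if G.Adj a b then μ b else 0 := by
  rw [Finset.mul_sum]
  refine Finset.sum_congr rfl fun b _ => ?_
  split_ifs with hab
  · exact h b hab
  · rw [mul_zero]

variable [DecidableEq V]

theorem sRef_apply_self (a : V) (v : V → ℂ) :
    sRef G a v a = (∑ b, if G.Adj a b then v b else 0) - v a :=
  if_pos rfl

theorem sRef_apply_of_ne {a c : V} (h : c ≠ a) (v : V → ℂ) : sRef G a v c = v c :=
  if_neg h

theorem compList_cons (a : V) (L : List V) (v : V → ℂ) :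
    compList G (a :: L) v = sRef G a (compList G L v) :=
  rfl

theorem sRef_apply_self_eq_sq_mul {μ w : V → ℂ} {q : ℂ} (hq : q ≠ 0) {a : V} {k : ℤ}
    (heig : (∑ b, if G.Adj a b then μ b else 0) = (q + q⁻¹) * μ a)
    (hwa : w a = q ^ k * μ a) (hadj : ∀ b, G.Adj a b → w b = q ^ (k + 1) * μ b) :
    sRef G a w a = q ^ 2 * (q ^ k * μ a) := by
  rw [sRef_apply_self, sum_adj_eq_mul_of_forall_adj G hadj, heig, hwa, zpow_add_one₀ hq]
  field_simp
  ring

theorem compList_apply_of_sorted_of_closed (p : V → ℤ)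
    (hp : ∀ a b, G.Adj a b → |p a - p b| = 1)
    {μ : V → ℂ} {q : ℂ} (hq : q ≠ 0)
    (heig : ∀ a, (∑ b, if G.Adj a b then μ b else 0) = (q + q⁻¹) * μ a)
    {Λ : V → ℂ} (hΛ : ∀ a, Λ a = q ^ p a * μ a) {L : List V} (hnd : L.Nodup)
    (hsort : L.Pairwise (fun a b => p b ≤ p a))
    (hclosed : ∀ a ∈ L, ∀ b, G.Adj a b → p b < p a → b ∈ L) (c : V) :
    compList G L Λ c = if c ∈ L then q ^ 2 * Λ c else Λ c := by
  induction L generalizing c with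
  | nil => simp [compList]
  | cons a L ih =>
    obtain ⟨haL, hnd⟩ := List.nodup_cons.mp hnd
    obtain ⟨hle, hsort⟩ := List.pairwise_cons.mp hsort
    have hclosed' : ∀ x ∈ L, ∀ b, G.Adj x b → p b < p x → b ∈ L := fun x hx b hxb hlt =>
      (List.mem_cons.mp (hclosed x (List.mem_cons_of_mem a hx) b hxb hlt)).resolve_left
        fun hba => by subst hba; have := hle x hx; omega
    have ih := ih hnd hsort hclosed'
    rw [compList_cons]
    by_cases hca : c = a
    · subst hca
      have hwc : compList G L Λ c = q ^ p c * μ c := by rw [ih, if_neg haL, hΛ]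
      have hadj : ∀ b, G.Adj c b → compList G L Λ b = q ^ (p c + 1) * μ b := by
        intro b hcb
        rw [ih, hΛ]
        rcases (abs_eq zero_le_one).mp (hp c b hcb) with hbelow | habove
        · have hbL : b ∈ L :=
            (List.mem_cons.mp (hclosed c List.mem_cons_self b hcb (by omega))).resolve_left
              fun hbc => G.loopless.irrefl c (hbc ▸ hcb)
          rw [if_pos hbL, show p c + 1 = p b + 2 by omega, zpow_add₀ hq]
          norm_cast
          ring
        · have hbL : b ∉ L := fun hbL => by have := hle b hbL; omega
          rw [if_neg hbL, show p c + 1 = p b by omega]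
      rw [sRef_apply_self_eq_sq_mul G hq (heig c) hwc hadj, if_pos List.mem_cons_self, hΛ]
    · rw [sRef_apply_of_ne G hca, ih]
      simp only [List.mem_cons, hca, false_or]

end

/-- **Lemma 2.3, eigenvector of the Coxeter element attached to any height
function.**  Let `Γ` be a finite simple graph admitting a height function `p` (that is,
`|p_a − p_b| = 1` whenever `a` and `b` are adjacent), let `μ ∈ ℂ^V` and `q ≠ 0` satisfy
`I·μ = (q + q⁻¹)·μ`, and set `Λ[p] := ∑_{a∈V} q^{p_a} μ_a e_a`.  Let `a₁, …, aₙ` be any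
enumeration of `V` with `p_{a₁} ≥ p_{a₂} ≥ … ≥ p_{aₙ}`.  Then
`(s_{a₁} ∘ s_{a₂} ∘ … ∘ s_{aₙ})(Λ[p]) = q²·Λ[p]` (the composition applies `s_{aₙ}`
first). -/
theorem coxeter_eigenvector_of_height_function {V : Type*} [Fintype V] [DecidableEq V]
    (G : SimpleGraph V) [DecidableRel G.Adj]
    (p : V → ℤ) (hp : ∀ a b : V, G.Adj a b → |p a - p b| = 1)
    (μ : V → ℂ) (q : ℂ) (hq : q ≠ 0)
    (heig : ∀ a : V, (∑ b, if G.Adj a b then μ b else 0) = (q + q⁻¹) * μ a)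
    (Λ : V → ℂ) (hΛ : ∀ a : V, Λ a = q ^ (p a) * μ a)
    (L : List V) (hLnd : L.Nodup) (hLmem : ∀ v : V, v ∈ L)
    (hLsort : L.Pairwise (fun a b => p b ≤ p a)) :
    compList G L Λ = fun a => q ^ 2 * Λ a := by
  funext c
  rw [compList_apply_of_sorted_of_closed G p hp hq heig hΛ hLnd hLsort
    (fun _ _ b _ _ => hLmem b), if_pos (hLmem c)]
end

section
/- Let Γ be a finite bipartite simple graph with parts O and E and adjacency matrix I. Suppose λ ∈ ℂ, λ ≠ 0, and u, w ∈ ℂ^V are supported on O and on E respectively, and (s_O ∘ s_E)(λ·u + w) = λ²·(λ·u + w). Then I·u = (λ + λ^{−1})·w and I·w = (λ + λ^{−1})·u; consequently I·(u + w) = (λ + λ^{−1})·(u + w) and I·(u − w) = −(λ + λ^{−1})·(u − w). -/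
/-! Reflections at the vertices of an independent set commute, and together they act by
`x_c ↦ (A x)_c - x_c` at each vertex `c` of the set, where `A` is the adjacency matrix.
Hence `s_E (t u + w) = t u + t A u - w`. Applying `s_O`, the coordinates in `E` of the
eigenvalue equation read `t A u - w = t² w`, and then those in `O` read `t² A w - t u = t³ u`. -/

open Finset

open Matrix

namespace SimpleGraph

variable {V : Type*}

def IsBipartition (G : SimpleGraph V) (O E : Finset V) : Prop :=
  Disjoint O E ∧ ∀ a b, G.Adj a b → (a ∈ O ∧ b ∈ E) ∨ (a ∈ E ∧ b ∈ O)

namespace IsBipartition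

variable {G : SimpleGraph V} {O E : Finset V}

theorem symm (h : G.IsBipartition O E) : G.IsBipartition E O :=
  ⟨h.1.symm, fun a b hab => (h.2 a b hab).symm⟩

theorem mem_right_of_adj (h : G.IsBipartition O E) {a b : V} (hab : G.Adj a b) (hb : b ∈ O) :
    a ∈ E :=
  (h.2 a b hab).elim (fun h' => absurd hb (Finset.disjoint_right.mp h.1 h'.2)) And.left

theorem not_adj_of_mem_right (h : G.IsBipartition O E) {a b : V} (ha : a ∈ E) (hb : b ∈ E) :
    ¬ G.Adj a b :=
  fun hab => Finset.disjoint_left.mp h.1 (h.symm.mem_right_of_adj hab hb) ha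

end IsBipartition

variable [Fintype V] (G : SimpleGraph V) [DecidableRel G.Adj]

theorem sum_ite_adj_eq_adjMatrix_mulVec (v : V → ℂ) (a : V) :
    (∑ b, if G.Adj a b then v b else 0) = (G.adjMatrix ℂ *ᵥ v) a := by
  simp [mulVec, dotProduct, adjMatrix_apply]

variable [DecidableEq V]

theorem compList_apply {L : List V} (hnd : L.Nodup) (hind : ∀ a ∈ L, ∀ b ∈ L, ¬ G.Adj a b)
    (v : V → ℂ) (c : V) :
    compList G L v c = if c ∈ L then (G.adjMatrix ℂ *ᵥ v) c - v c else v c := by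
  induction L generalizing c with
  | nil => simp [compList]
  | cons a L ih =>
    obtain ⟨haL, hnd⟩ := List.nodup_cons.mp hnd
    have ih := ih hnd fun x hx y hy => hind x (.tail _ hx) y (.tail _ hy)
    change sRef G a (compList G L v) c = _
    by_cases hca : c = a
    · subst hca
      have hfix : ∀ b, G.Adj c b → compList G L v b = v b := fun b hb => by
        rw [ih, if_neg (show b ∉ L from fun hbL => hind c (.head _) b (.tail _ hbL) hb)]
      have hsum : (∑ b, if G.Adj c b then compList G L v b else 0) = (G.adjMatrix ℂ *ᵥ v) c := by
        rw [← sum_ite_adj_eq_adjMatrix_mulVec]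
        exact Finset.sum_congr rfl fun b _ => by split_ifs with hb <;> simp [hfix b, hb]
      simp only [sRef, ite_true, hsum, List.mem_cons_self, ih c, if_neg haL]
    · simp [sRef, hca, ih]

theorem compList_eq_piecewise {L : List V} {S : Finset V} (hnd : L.Nodup)
    (hLS : ∀ x, x ∈ L ↔ x ∈ S) (hS : ∀ a ∈ S, ∀ b ∈ S, ¬ G.Adj a b) (v : V → ℂ) :
    compList G L v = S.piecewise (G.adjMatrix ℂ *ᵥ v - v) v := by
  ext c
  simp [G.compList_apply hnd (by simpa only [hLS] using hS), Finset.piecewise, hLS]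

namespace IsBipartition

variable {G} {O E : Finset V} {L : List V} {t : ℂ} {u w : V → ℂ}

omit [DecidableEq V] in
theorem adjMatrix_mulVec_apply_eq_zero (h : G.IsBipartition O E) {v : V → ℂ}
    (hv : ∀ b ∉ O, v b = 0) {a : V} (ha : a ∉ E) : (G.adjMatrix ℂ *ᵥ v) a = 0 := by
  rw [← sum_ite_adj_eq_adjMatrix_mulVec]
  refine Finset.sum_eq_zero fun b _ => ?_
  split_ifs with hab
  exacts [hv b fun hb => ha (h.mem_right_of_adj hab hb), rfl]

theorem compList_eq_piecewise (h : G.IsBipartition O E) (hnd : L.Nodup)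
    (hL : ∀ x, x ∈ L ↔ x ∈ E) (v : V → ℂ) :
    compList G L v = E.piecewise (G.adjMatrix ℂ *ᵥ v - v) v :=
  G.compList_eq_piecewise hnd hL (fun _ ha _ hb => h.not_adj_of_mem_right ha hb) v

/-- On `E` the vector becomes `t • A u - w`; off `E` it is unchanged, and there `A u = 0`. -/
theorem compList_smul_add (h : G.IsBipartition O E) (hnd : L.Nodup) (hL : ∀ x, x ∈ L ↔ x ∈ E)
    (hu : ∀ a ∉ O, u a = 0) (hw : ∀ a ∉ E, w a = 0) :
    compList G L (t • u + w) = t • u + t • (G.adjMatrix ℂ *ᵥ u) - w := by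
  ext c
  by_cases hc : c ∈ E
  · have hcO : c ∉ O := Finset.disjoint_right.mp h.1 hc
    simp only [h.compList_eq_piecewise hnd hL, Finset.piecewise_eq_of_mem _ _ _ hc, mulVec_add,
      mulVec_smul, Pi.add_apply, Pi.sub_apply, Pi.smul_apply, smul_eq_mul,
      h.symm.adjMatrix_mulVec_apply_eq_zero hw hcO, hu c hcO]
    ring
  · simp only [h.compList_eq_piecewise hnd hL, Finset.piecewise_eq_of_notMem _ _ _ hc,
      Pi.add_apply, Pi.sub_apply, Pi.smul_apply, smul_eq_mul, hw c hc,
      h.adjMatrix_mulVec_apply_eq_zero hu hc]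
    ring

theorem adjMatrix_mulVec_eq_of_compList_eq (h : G.IsBipartition O E) (hnd : L.Nodup)
    (hL : ∀ x, x ∈ L ↔ x ∈ O) (ht : t ≠ 0) (hu : ∀ a ∉ O, u a = 0) (hw : ∀ a ∉ E, w a = 0)
    (heig : compList G L (t • u + t • (G.adjMatrix ℂ *ᵥ u) - w) = t ^ 2 • (t • u + w)) :
    G.adjMatrix ℂ *ᵥ u = (t + t⁻¹) • w ∧ G.adjMatrix ℂ *ᵥ w = (t + t⁻¹) • u := by
  have hsO := h.symm.compList_eq_piecewise hnd hL
  have hOE : ∀ c ∈ O, c ∉ E := fun _ hc => Finset.disjoint_left.mp h.1 hc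
  have hAu : G.adjMatrix ℂ *ᵥ u = (t + t⁻¹) • w := by
    ext c
    by_cases hc : c ∈ O
    · simp [h.adjMatrix_mulVec_apply_eq_zero hu (hOE c hc), hw c (hOE c hc)]
    · have hc' := congrFun heig c
      simp only [hsO, Finset.piecewise_eq_of_notMem _ _ _ hc, Pi.add_apply, Pi.sub_apply,
        Pi.smul_apply, smul_eq_mul, hu c hc] at hc'
      refine mul_left_cancel₀ ht ?_
      rw [Pi.smul_apply, smul_eq_mul]
      linear_combination hc' - w c * mul_inv_cancel₀ ht
  refine ⟨hAu, ?_⟩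
  ext c
  by_cases hc : c ∈ O
  · have hc' := congrFun heig c
    simp only [hsO, Finset.piecewise_eq_of_mem _ _ _ hc, mulVec_add, mulVec_sub, mulVec_smul, hAu,
      Pi.add_apply, Pi.sub_apply, Pi.smul_apply, smul_eq_mul, hw c (hOE c hc)] at hc'
    refine mul_left_cancel₀ (pow_ne_zero 2 ht) ?_
    rw [Pi.smul_apply, smul_eq_mul]
    linear_combination hc' - ((G.adjMatrix ℂ *ᵥ w) c + t * u c) * mul_inv_cancel₀ ht
  · simp [h.symm.adjMatrix_mulVec_apply_eq_zero hw hc, hu c hc]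

end IsBipartition

end SimpleGraph

theorem bipartite_coxeter_to_adjacency_general {V : Type*} [Fintype V] [DecidableEq V]
    (G : SimpleGraph V) [DecidableRel G.Adj]
    (O E : Finset V) (hdisj : Disjoint O E)
    (hbip : ∀ a b : V, G.Adj a b → (a ∈ O ∧ b ∈ E) ∨ (a ∈ E ∧ b ∈ O))
    (LO LE : List V) (hLOnd : LO.Nodup) (hLEnd : LE.Nodup)
    (hLO : ∀ x : V, x ∈ LO ↔ x ∈ O) (hLE : ∀ x : V, x ∈ LE ↔ x ∈ E)
    (t : ℂ) (ht : t ≠ 0) (u w : V → ℂ)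
    (hu : ∀ a : V, a ∉ O → u a = 0) (hw : ∀ a : V, a ∉ E → w a = 0)
    (heig : compList G LO (compList G LE (fun a => t * u a + w a))
      = fun a => t ^ 2 * (t * u a + w a)) :
    (∀ a : V, (∑ b, if G.Adj a b then u b else 0) = (t + t⁻¹) * w a) ∧
    (∀ a : V, (∑ b, if G.Adj a b then w b else 0) = (t + t⁻¹) * u a) ∧
    (∀ a : V, (∑ b, if G.Adj a b then (u b + w b) else 0) = (t + t⁻¹) * (u a + w a)) ∧
    (∀ a : V, (∑ b, if G.Adj a b then (u b - w b) else 0) = -(t + t⁻¹) * (u a - w a)) := by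
  have hG : G.IsBipartition O E := ⟨hdisj, hbip⟩
  have heig' : compList G LO (t • u + t • (G.adjMatrix ℂ *ᵥ u) - w) = t ^ 2 • (t • u + w) := by
    rw [← hG.compList_smul_add hLEnd hLE hu hw]
    exact heig
  obtain ⟨hAu, hAw⟩ := hG.adjMatrix_mulVec_eq_of_compList_eq hLOnd hLO ht hu hw heig'
  simp only [SimpleGraph.sum_ite_adj_eq_adjMatrix_mulVec]
  refine ⟨fun a => congrFun hAu a, fun a => congrFun hAw a, fun a => ?_, fun a => ?_⟩
  · change (G.adjMatrix ℂ *ᵥ (u + w)) a = _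
    simp only [mulVec_add, hAu, hAw, Pi.add_apply, Pi.smul_apply, smul_eq_mul]
    ring
  · change (G.adjMatrix ℂ *ᵥ (u - w)) a = _
    simp only [mulVec_sub, hAu, hAw, Pi.sub_apply, Pi.smul_apply, smul_eq_mul]
    ring

/-- Let `Γ` be a finite bipartite simple graph with parts `O` and `E`
and adjacency matrix `I`.  Suppose `t ∈ ℂ`, `t ≠ 0`, and `u, w ∈ ℂ^V` are supported on
`O` and on `E` respectively, and `(s_O ∘ s_E)(t·u + w) = t²·(t·u + w)` (where `s_O`, `s_E`
are the compositions of the reflections over `O` resp. `E`, well defined since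
reflections at non-adjacent vertices commute).  Then `I·u = (t + t⁻¹)·w` and
`I·w = (t + t⁻¹)·u`; consequently `I·(u + w) = (t + t⁻¹)·(u + w)` and
`I·(u − w) = −(t + t⁻¹)·(u − w)`. -/
theorem bipartite_coxeter_to_adjacency {V : Type*} [Fintype V] [DecidableEq V]
    (G : SimpleGraph V) [DecidableRel G.Adj]
    (O E : Finset V) (hdisj : Disjoint O E) (hcover : ∀ v : V, v ∈ O ∨ v ∈ E)
    (hbip : ∀ a b : V, G.Adj a b → (a ∈ O ∧ b ∈ E) ∨ (a ∈ E ∧ b ∈ O))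
    (LO LE : List V) (hLOnd : LO.Nodup) (hLEnd : LE.Nodup)
    (hLO : ∀ x : V, x ∈ LO ↔ x ∈ O) (hLE : ∀ x : V, x ∈ LE ↔ x ∈ E)
    (t : ℂ) (ht : t ≠ 0) (u w : V → ℂ)
    (hu : ∀ a : V, a ∉ O → u a = 0) (hw : ∀ a : V, a ∉ E → w a = 0)
    (heig : compList G LO (compList G LE (fun a => t * u a + w a))
      = fun a => t ^ 2 * (t * u a + w a)) :
    (∀ a : V, (∑ b, if G.Adj a b then u b else 0) = (t + t⁻¹) * w a) ∧
    (∀ a : V, (∑ b, if G.Adj a b then w b else 0) = (t + t⁻¹) * u a) ∧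
    (∀ a : V, (∑ b, if G.Adj a b then (u b + w b) else 0) = (t + t⁻¹) * (u a + w a)) ∧
    (∀ a : V, (∑ b, if G.Adj a b then (u b - w b) else 0) = -(t + t⁻¹) * (u a - w a)) :=
  bipartite_coxeter_to_adjacency_general G O E hdisj hbip LO LE hLOnd hLEnd hLO hLE t ht u w hu hw
    heig
end

section
/- (Hirota equation implies the Y-system.) Let Γ be a finite simple graph with vertex set V, let η ∈ ℂ be nonzero, and let T : V × ℤ → (ℂ → ℂ) be a family of nowhere-vanishing functions satisfying the Hirota equation T_{a,s}^{[1]}(z)·T_{a,s}^{[-1]}(z) = T_{a,s+1}(z)·T_{a,s-1}(z) + Π_{b adjacent to a} T_{b,s}(z) for all a ∈ V, s ∈ ℤ, z ∈ ℂ. Define Y_{a,s}(z) := (Π_{b adjacent to a} T_{b,s}(z)) / (T_{a,s-1}(z)·T_{a,s+1}(z)). Then Y satisfies the Y-system: for all a, s, z, Y_{a,s}^{[1]}(z)·Y_{a,s}^{[-1]}(z)·(1 + Y_{a,s+1}(z))·(1 + Y_{a,s-1}(z)) = Y_{a,s+1}(z)·Y_{a,s-1}(z)·Π_{b adjacent to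 a}(1 + Y_{b,s}(z)); moreover 1 + Y_{a,s} = T_{a,s}^{[1]}·T_{a,s}^{[-1]} / (T_{a,s+1}·T_{a,s-1}), which never vanishes. -/
open Finset

/-- **Hirota equation implies the Y-system.**
Let `Γ` be a finite simple graph with vertex set `V`, let `η ∈ ℂ` be nonzero, write
`f^{[n]}(z) := f(z + n·η/2)`, and let `T : V × ℤ → (ℂ → ℂ)` be a family of
nowhere-vanishing functions satisfying the Hirota equation
`T_{a,s}^{[1]}(z)·T_{a,s}^{[-1]}(z) = T_{a,s+1}(z)·T_{a,s-1}(z) + ∏_{b ∼ a} T_{b,s}(z)`.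
Define `Y_{a,s}(z) := (∏_{b ∼ a} T_{b,s}(z)) / (T_{a,s-1}(z)·T_{a,s+1}(z))`.  Then `Y`
satisfies the Y-system
`Y_{a,s}^{[1]}·Y_{a,s}^{[-1]}·(1 + Y_{a,s+1})·(1 + Y_{a,s-1})
  = Y_{a,s+1}·Y_{a,s-1}·∏_{b ∼ a}(1 + Y_{b,s})`;
moreover `1 + Y_{a,s} = T_{a,s}^{[1]}·T_{a,s}^{[-1]} / (T_{a,s+1}·T_{a,s-1})`, which never
vanishes. -/
theorem hirota_implies_Y_system {V : Type*} [Fintype V] [DecidableEq V]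
    (G : SimpleGraph V) [DecidableRel G.Adj]
    (η : ℂ) (hη : η ≠ 0)
    (T : V → ℤ → ℂ → ℂ) (hT : ∀ (a : V) (s : ℤ) (z : ℂ), T a s z ≠ 0)
    (hHirota : ∀ (a : V) (s : ℤ) (z : ℂ),
      T a s (z + η / 2) * T a s (z - η / 2)
        = T a (s + 1) z * T a (s - 1) z + ∏ b ∈ G.neighborFinset a, T b s z)
    (Y : V → ℤ → ℂ → ℂ)
    (hY : ∀ (a : V) (s : ℤ) (z : ℂ),
      Y a s z = (∏ b ∈ G.neighborFinset a, T b s z) / (T a (s - 1) z * T a (s + 1) z)) :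
    (∀ (a : V) (s : ℤ) (z : ℂ),
      Y a s (z + η / 2) * Y a s (z - η / 2) * (1 + Y a (s + 1) z) * (1 + Y a (s - 1) z)
        = Y a (s + 1) z * Y a (s - 1) z * ∏ b ∈ G.neighborFinset a, (1 + Y b s z)) ∧
    (∀ (a : V) (s : ℤ) (z : ℂ),
      1 + Y a s z
        = T a s (z + η / 2) * T a s (z - η / 2) / (T a (s + 1) z * T a (s - 1) z)) ∧
    (∀ (a : V) (s : ℤ) (z : ℂ), 1 + Y a s z ≠ 0) := by
  have hP : ∀ (a : V) (s : ℤ) (z : ℂ), (∏ b ∈ G.neighborFinset a, T b s z) ≠ 0 := by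
    intro a s z
    exact Finset.prod_ne_zero_iff.mpr fun b _ => hT b s z
  have h1 : ∀ (a : V) (s : ℤ) (z : ℂ),
      1 + Y a s z
        = T a s (z + η / 2) * T a s (z - η / 2) / (T a (s + 1) z * T a (s - 1) z) := by
    intro a s z
    rw [hY a s z, hHirota a s z]
    have hA := hT a (s - 1) z
    have hB := hT a (s + 1) z
    field_simp
  refine ⟨?_, h1, ?_⟩
  · intro a s z
    have e1 : s + 1 - 1 = s := by ring
    have e2 : s - 1 + 1 = s := by ring
    have hprod : (∏ b ∈ G.neighborFinset a, (1 + Y b s z))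
        = (∏ b ∈ G.neighborFinset a, T b s (z + η / 2))
          * (∏ b ∈ G.neighborFinset a, T b s (z - η / 2))
          / ((∏ b ∈ G.neighborFinset a, T b (s + 1) z)
            * (∏ b ∈ G.neighborFinset a, T b (s - 1) z)) := by
      rw [Finset.prod_congr rfl (fun b _ => h1 b s z)]
      rw [Finset.prod_div_distrib, Finset.prod_mul_distrib, Finset.prod_mul_distrib]
    rw [hY a s (z + η / 2), hY a s (z - η / 2), h1 a (s + 1) z, h1 a (s - 1) z,
      hY a (s + 1) z, hY a (s - 1) z, hprod, e1, e2]
    simp only [div_mul_div_comm]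
    rw [div_eq_div_iff (by apply_rules [mul_ne_zero, hT, hP])
      (by apply_rules [mul_ne_zero, hT, hP])]
    ring
  · intro a s z
    rw [h1 a s z]
    exact div_ne_zero (mul_ne_zero (hT _ _ _) (hT _ _ _))
      (mul_ne_zero (hT _ _ _) (hT _ _ _))
end

section
/- (Bilinear Q-function ansatz solves the Hirota equation.) Let Γ be a finite simple graph with vertex set V and η ∈ ℂ nonzero. For each a ∈ V let M_a, N_a be ℂ-vector spaces with a bilinear form B_a : M_a × N_a → ℂ, and equip Λ²M_a × Λ²N_a with the induced pairing determined by ⟨x∧y, u∧v⟩_a = B_a(x,u)·B_a(y,v) − B_a(x,v)·B_a(y,u). Let Q_a : ℂ → M_a and Qt_a : ℂ → N_a, and write f^{[n]}(z) := f(z + n·η/2). Suppose there are linear maps Φ_a : ⊗_{b adjacent to a} M_b → Λ²M_a and Φt_a : ⊗_{b adjacent to a} N_b → Λ²N_a such that for all a ∈ V and all z, w ∈ ℂ: (i) Q_a^{[1]}(z) ∧ Q_a^{[-1]}(z) = Φ_a(⊗_{b adjacent to a} Q_b(z)) and Qt_a^{[1]}(z) ∧ Qt_a^{[-1]}(z)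 = Φt_a(⊗_{b adjacent to a} Qt_b(z)); (ii) ⟨Φ_a(⊗_b Q_b(z)), Φt_a(⊗_b Qt_b(w))⟩_a = Π_{b adjacent to a} B_b(Q_b(z), Qt_b(w)). Then the functions T_{a,s}(z) := B_a(Q_a^{[s]}(z), Qt_a^{[-s]}(z)) satisfy the Hirota equation: T_{a,s}^{[1]}(z)·T_{a,s}^{[-1]}(z) − T_{a,s+1}(z)·T_{a,s-1}(z) = Π_{b adjacent to a} T_{b,s}(z) for all a ∈ V, s ∈ ℤ, z ∈ ℂ. -/
open scoped TensorProduct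

/-- The wedge `x ∧ y`, viewed as an element of the second exterior power `⋀[ℂ]^2 M`
of a complex vector space `M`. -/
noncomputable def wedge2 {M : Type*} [AddCommGroup M] [Module ℂ M] (x y : M) :
    ⋀[ℂ]^2 M :=
  ⟨ExteriorAlgebra.ιMulti ℂ 2 ![x, y],
    ExteriorAlgebra.ιMulti_range ℂ 2 (Set.mem_range_self ![x, y])⟩

/-- **Bilinear Q-function ansatz solves the Hirota equation.**
Let `Γ` be a finite simple graph with vertex set `V` and `η ∈ ℂ` nonzero.  For each vertex
`a` let `M a`, `N a` be complex vector spaces with a bilinear form `B a : M a × N a → ℂ`,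
and equip `⋀² M a × ⋀² N a` with the induced pairing determined by
`⟨x∧y, u∧v⟩ = B(x,u)·B(y,v) − B(x,v)·B(y,u)`.  Let `Q a : ℂ → M a`, `Qt a : ℂ → N a`, and
write `f^{[n]}(z) := f(z + n·η/2)`.  Suppose there are linear maps
`Φ a : ⨂_{b ∼ a} M b →ₗ ⋀² M a` and `Φt a : ⨂_{b ∼ a} N b →ₗ ⋀² N a` such that for all
`a` and all `z, w ∈ ℂ`:
(i) `Q_a^{[1]}(z) ∧ Q_a^{[-1]}(z) = Φ_a(⨂_{b ∼ a} Q_b(z))` and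
    `Qt_a^{[1]}(z) ∧ Qt_a^{[-1]}(z) = Φt_a(⨂_{b ∼ a} Qt_b(z))`;
(ii) `⟨Φ_a(⨂_b Q_b(z)), Φt_a(⨂_b Qt_b(w))⟩ = ∏_{b ∼ a} B_b(Q_b(z), Qt_b(w))`.
Then the functions `T_{a,s}(z) := B_a(Q_a^{[s]}(z), Qt_a^{[-s]}(z))` satisfy the Hirota
equation `T_{a,s}^{[1]}·T_{a,s}^{[-1]} − T_{a,s+1}·T_{a,s-1} = ∏_{b ∼ a} T_{b,s}`. -/
theorem bilinear_Q_ansatz_solves_hirota {V : Type*} [Fintype V] [DecidableEq V]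
    (G : SimpleGraph V) [DecidableRel G.Adj]
    (η : ℂ) (hη : η ≠ 0)
    (M N : V → Type*)
    [∀ a, AddCommGroup (M a)] [∀ a, Module ℂ (M a)]
    [∀ a, AddCommGroup (N a)] [∀ a, Module ℂ (N a)]
    (B : ∀ a, M a →ₗ[ℂ] N a →ₗ[ℂ] ℂ)
    (pair : ∀ a, ⋀[ℂ]^2 (M a) →ₗ[ℂ] ⋀[ℂ]^2 (N a) →ₗ[ℂ] ℂ)
    (hpair : ∀ (a : V) (x y : M a) (u v : N a),
      pair a (wedge2 x y) (wedge2 u v) = B a x u * B a y v - B a x v * B a y u)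
    (Q : ∀ a, ℂ → M a) (Qt : ∀ a, ℂ → N a)
    (Φ : ∀ a : V, (⨂[ℂ] (b : G.neighborSet a), M b) →ₗ[ℂ] ⋀[ℂ]^2 (M a))
    (Φt : ∀ a : V, (⨂[ℂ] (b : G.neighborSet a), N b) →ₗ[ℂ] ⋀[ℂ]^2 (N a))
    (hQ : ∀ (a : V) (z : ℂ),
      wedge2 (Q a (z + η / 2)) (Q a (z - η / 2))
        = Φ a (⨂ₜ[ℂ] (b : G.neighborSet a), Q b z))
    (hQt : ∀ (a : V) (z : ℂ),
      wedge2 (Qt a (z + η / 2)) (Qt a (z - η / 2))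
        = Φt a (⨂ₜ[ℂ] (b : G.neighborSet a), Qt b z))
    (hproj : ∀ (a : V) (z w : ℂ),
      pair a (Φ a (⨂ₜ[ℂ] (b : G.neighborSet a), Q b z))
             (Φt a (⨂ₜ[ℂ] (b : G.neighborSet a), Qt b w))
        = ∏ b ∈ G.neighborFinset a, B b (Q b z) (Qt b w))
    (T : V → ℤ → ℂ → ℂ)
    (hT : ∀ (a : V) (s : ℤ) (z : ℂ),
      T a s z = B a (Q a (z + (s : ℂ) * η / 2)) (Qt a (z - (s : ℂ) * η / 2))) :
    ∀ (a : V) (s : ℤ) (z : ℂ),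
      T a s (z + η / 2) * T a s (z - η / 2) - T a (s + 1) z * T a (s - 1) z
        = ∏ b ∈ G.neighborFinset a, T b s z := by
  intro a s z
  have key := hpair a (Q a (z + (s : ℂ) * η / 2 + η / 2)) (Q a (z + (s : ℂ) * η / 2 - η / 2))
    (Qt a (z - (s : ℂ) * η / 2 + η / 2)) (Qt a (z - (s : ℂ) * η / 2 - η / 2))
  rw [hQ a (z + (s : ℂ) * η / 2), hQt a (z - (s : ℂ) * η / 2), hproj] at key
  have prodEq : ∏ b ∈ G.neighborFinset a, B b (Q b (z + (s : ℂ) * η / 2))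
      (Qt b (z - (s : ℂ) * η / 2)) = ∏ b ∈ G.neighborFinset a, T b s z := by
    refine Finset.prod_congr rfl fun b _ => ?_
    rw [hT]
  rw [prodEq] at key
  rw [hT, hT, hT, hT, key]
  push_cast
  ring_nf
end

section
/- (Projection and quantisation sums for the D_r character solution.) Let r ≥ 2 be an integer and x_1, …, x_r ∈ ℂ \ {0} be such that x_a ≠ x_b and x_a·x_b ≠ 1 for all a ≠ b. Set K_a := Π_{b ≠ a} x_b / ((x_b − x_a)(x_b − x_a^{−1})). Then Σ_{a=1}^{r} K_a·(x_a^{s} + x_a^{−s}) = 0 for every integer s with 0 ≤ s ≤ r−2, and Σ_{a=1}^{r} K_a·(x_a^{r−1} + x_a^{−(r−1)}) = (−1)^{r+1}. -/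
open Polynomial Finset

private lemma leadingCoeff_lagrange_basis {F : Type*} [Field F] {ι : Type*} [DecidableEq ι]
    {s : Finset ι} {v : ι → F} {i : ι} (hvs : Set.InjOn v s) (hi : i ∈ s) :
    (Lagrange.basis s v i).coeff (#s - 1) = ∏ j ∈ s.erase i, (v i - v j)⁻¹ := by
  rw [← Lagrange.natDegree_basis hvs hi, coeff_natDegree, Lagrange.basis, leadingCoeff_prod]
  refine prod_congr rfl fun j hj => ?_
  rw [Lagrange.basisDivisor, leadingCoeff_mul, leadingCoeff_C,
    (monic_X_sub_C (v j)).leadingCoeff, mul_one]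

private lemma coeff_interpolation {F : Type*} [Field F] {n : ℕ} (v : Fin n → F)
    (hv : Function.Injective v) (P : F[X]) (hP : P.degree < (n : WithBot ℕ)) :
    ∑ a, P.eval (v a) * ∏ b ∈ univ.erase a, (v a - v b)⁻¹ = P.coeff (n - 1) := by
  have hcard : #(univ : Finset (Fin n)) = n := by simp
  have h := Lagrange.eq_interpolate (s := (univ : Finset (Fin n))) (v := v)
    (hv.injOn) (by rw [hcard]; exact_mod_cast hP)
  conv_rhs => rw [h, Lagrange.interpolate_apply, finset_sum_coeff]
  refine (Finset.sum_congr rfl fun a _ => ?_).symm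
  rw [coeff_C_mul]
  congr 1
  have := leadingCoeff_lagrange_basis (s := (univ : Finset (Fin n))) hv.injOn (mem_univ a)
  rwa [hcard] at this

private lemma dickson_deg : ∀ n : ℕ, ((dickson 1 (1 : ℂ) n).degree ≤ (n : WithBot ℕ)) ∧
    (0 < n → (dickson 1 (1 : ℂ) n).coeff n = 1) := by
  have key : ∀ n : ℕ,
      (((dickson 1 (1 : ℂ) n).degree ≤ (n : WithBot ℕ)) ∧
        (0 < n → (dickson 1 (1 : ℂ) n).coeff n = 1)) ∧
      (((dickson 1 (1 : ℂ) (n + 1)).degree ≤ ((n + 1 : ℕ) : WithBot ℕ)) ∧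
        (0 < n + 1 → (dickson 1 (1 : ℂ) (n + 1)).coeff (n + 1) = 1)) := by
    intro n
    induction n with
    | zero =>
      refine ⟨⟨?_, by simp⟩, ?_, ?_⟩
      · rw [dickson_zero]
        refine le_trans (le_trans (degree_sub_le _ _)
          (max_le (degree_natCast_le 3) (degree_natCast_le 1))) ?_
        exact_mod_cast le_refl (0 : WithBot ℕ)
      · rw [dickson_one]; exact_mod_cast degree_X_le
      · intro _; rw [dickson_one]; simp
    | succ n ih =>
      refine ⟨ih.2, ?_, ?_⟩
      · rw [dickson_add_two]
        refine le_trans (degree_sub_le _ _) (max_le ?_ ?_)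
        · calc (X * dickson 1 (1:ℂ) (n+1)).degree ≤ X.degree + (dickson 1 (1:ℂ) (n+1)).degree :=
              degree_mul_le _ _
            _ ≤ 1 + ((n + 1 : ℕ) : WithBot ℕ) := add_le_add degree_X_le ih.2.1
            _ = ((n + 2 : ℕ) : WithBot ℕ) := by push_cast; ring
        · calc (C (1:ℂ) * dickson 1 (1:ℂ) n).degree ≤ (C (1:ℂ)).degree + (dickson 1 (1:ℂ) n).degree :=
              degree_mul_le _ _
            _ ≤ 0 + ((n : ℕ) : WithBot ℕ) := add_le_add degree_C_le ih.1.1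
            _ ≤ ((n + 2 : ℕ) : WithBot ℕ) := by
                rw [zero_add]; exact_mod_cast Nat.le_add_right n 2
      · intro _
        rw [dickson_add_two, coeff_sub, coeff_X_mul, ih.2.2 n.succ_pos, coeff_C_mul,
          coeff_eq_zero_of_degree_lt (lt_of_le_of_lt ih.1.1 ?_), mul_zero, sub_zero]
        exact_mod_cast (by omega : n < n + 2)
  exact fun n => (key n).1

/-- **Projection and quantisation sums for the `D_r` character solution.**
Let `r ≥ 2` and let `x_1, …, x_r` be nonzero complex numbers with `x_a ≠ x_b` and
`x_a·x_b ≠ 1` for all `a ≠ b`.  Set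
`K_a := ∏_{b ≠ a} x_b / ((x_b − x_a)(x_b − x_a⁻¹))`.  Then
`∑_{a=1}^r K_a·(x_a^s + x_a^{−s}) = 0` for every integer `0 ≤ s ≤ r−2`, and
`∑_{a=1}^r K_a·(x_a^{r−1} + x_a^{−(r−1)}) = (−1)^{r+1}`. -/
theorem Dr_character_projection_quantisation (r : ℕ) (hr : 2 ≤ r)
    (x : Fin r → ℂ) (hx0 : ∀ a, x a ≠ 0)
    (hx1 : ∀ a b : Fin r, a ≠ b → x a ≠ x b)
    (hx2 : ∀ a b : Fin r, a ≠ b → x a * x b ≠ 1)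
    (K : Fin r → ℂ)
    (hK : ∀ a, K a = ∏ b ∈ Finset.univ.erase a,
      x b / ((x b - x a) * (x b - (x a)⁻¹))) :
    (∀ s : ℤ, 0 ≤ s → s ≤ (r : ℤ) - 2 →
      (∑ a, K a * (x a ^ s + x a ^ (-s))) = 0) ∧
    (∑ a, K a * (x a ^ ((r : ℤ) - 1) + x a ^ (-((r : ℤ) - 1)))) = (-1) ^ (r + 1) := by
  classical
  set y : Fin r → ℂ := fun a => x a + (x a)⁻¹ with hy
  have hyinj : Function.Injective y := by
    intro a b hab
    by_contra hne
    have key : (x a - x b) * (x a * x b - 1) = 0 := by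
      have h : x a + (x a)⁻¹ = x b + (x b)⁻¹ := hab
      field_simp [hx0 a, hx0 b] at h
      linear_combination h
    rcases mul_eq_zero.mp key with h | h
    · exact hx1 a b hne (sub_eq_zero.mp h)
    · exact hx2 a b hne (sub_eq_zero.mp h)
  -- rewrite K in terms of y
  have hKy : ∀ a, K a = (-1 : ℂ) ^ (r - 1) * ∏ b ∈ Finset.univ.erase a, (y a - y b)⁻¹ := by
    intro a
    rw [hK]
    have step : ∀ b ∈ Finset.univ.erase a,
        x b / ((x b - x a) * (x b - (x a)⁻¹)) = -(y a - y b)⁻¹ := by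
      intro b hb
      have hba : b ≠ a := (Finset.mem_erase.mp hb).1
      have hdenom : (x b - x a) * (x b - (x a)⁻¹) = x b * (y b - y a) := by
        simp only [hy]
        linear_combination mul_inv_cancel₀ (hx0 a) - mul_inv_cancel₀ (hx0 b)
      rw [hdenom, div_mul_cancel_left₀ (hx0 b),
        show y b - y a = -(y a - y b) by ring, inv_neg]
    rw [Finset.prod_congr rfl step]
    have hcard : #(Finset.univ.erase a) = r - 1 := by
      rw [Finset.card_erase_of_mem (Finset.mem_univ a), Finset.card_univ, Fintype.card_fin]
    calc ∏ b ∈ Finset.univ.erase a, -(y a - y b)⁻¹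
        = ∏ b ∈ Finset.univ.erase a, (-1 : ℂ) * (y a - y b)⁻¹ := by
          simp [neg_one_mul]
      _ = (-1 : ℂ) ^ (r - 1) * ∏ b ∈ Finset.univ.erase a, (y a - y b)⁻¹ := by
          rw [Finset.prod_mul_distrib, Finset.prod_const, hcard]
  -- the key sum formula
  have main : ∀ n : ℕ, n ≤ r - 1 →
      (∑ a, K a * (x a ^ (n : ℤ) + x a ^ (-(n : ℤ)))) =
        (-1 : ℂ) ^ (r - 1) * (Polynomial.dickson 1 (1 : ℂ) n).coeff (r - 1) := by
    intro n hn
    have hterm : ∀ a, K a * (x a ^ (n : ℤ) + x a ^ (-(n : ℤ))) =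
        (-1 : ℂ) ^ (r - 1) * ((Polynomial.dickson 1 (1 : ℂ) n).eval (y a) *
          ∏ b ∈ Finset.univ.erase a, (y a - y b)⁻¹) := by
      intro a
      rw [hKy a, Polynomial.dickson_one_one_eval_add_inv (x a) (x a)⁻¹
        (mul_inv_cancel₀ (hx0 a)) n]
      rw [zpow_natCast, zpow_neg, ← inv_zpow, zpow_natCast]
      ring
    rw [Finset.sum_congr rfl (fun a _ => hterm a), ← Finset.mul_sum]
    congr 1
    apply coeff_interpolation y hyinj
    refine lt_of_le_of_lt (dickson_deg n).1 ?_
    exact_mod_cast (by omega : n < r)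
  constructor
  · intro s hs0 hs1
    obtain ⟨n, rfl⟩ := Int.eq_ofNat_of_zero_le hs0
    have hn : n ≤ r - 2 := by omega
    rw [main n (by omega)]
    rw [Polynomial.coeff_eq_zero_of_degree_lt
      (lt_of_le_of_lt (dickson_deg n).1 (by exact_mod_cast (by omega : n < r - 1))), mul_zero]
  · have hcast : ((r : ℤ) - 1) = ((r - 1 : ℕ) : ℤ) := by omega
    rw [hcast, main (r - 1) le_rfl, (dickson_deg (r - 1)).2 (by omega), mul_one,
      show r + 1 = (r - 1) + 2 by omega, pow_add]
    norm_num
end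

section
/- (Determinant character formula for the symmetric traceless tensor T-functions of so(2r).) Let r ≥ 2 be an integer and x_1, …, x_r ∈ ℂ \ {0} with x_a ≠ x_b and x_a·x_b ≠ 1 for all a ≠ b, and set K_a := Π_{b ≠ a} x_b / ((x_b − x_a)(x_b − x_a^{−1})). Then the denominator determinant D := det_{1≤a,b≤r}( x_a^{r−b} + x_a^{−(r−b)} ) is nonzero, and for every integer s ≥ 0, (−1)^{r+1}·Σ_{a=1}^{r} K_a·( x_a^{s+r−1} + x_a^{−(s+r−1)} ) = N_s / D, where N_s := det_{1≤a,b≤r}( x_a^{c_b} + x_a^{−c_b} ) with exponents c_1 = r−1+s and c_b = r−b for 2 ≤ b ≤ r. -/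
/-!
Put `y_a = x_a + x_a⁻¹`. The rescaled Chebyshev polynomials satisfy `C_k(x + x⁻¹) = x^k + x^(-k)`,
so `D` and `N_s` are the determinants of `M = (C_{r-1-b}(y_a))_{a,b}` and of `M` with its first
column replaced by `f_a = C_{s+r-1}(y_a)`. The nodes `y_a` are distinct since `x_a ≠ x_b` and
`x_a x_b ≠ 1`. Reversing the columns of `M` and halving `C_0 = 2` gives a Vandermonde-type matrix,
so `D ≠ 0`. By Cramer's rule `N_s / D` is the first coordinate of `M⁻¹ f`, i.e. the coefficient of
`C_{r-1}` in the polynomial of degree `< r` interpolating `f` at the `y_a`. Since `r ≥ 2`, the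
other columns `C_{r-2}, …, C_0` have degree `< r - 1`, so this coordinate is the coefficient of
`y^(r-1)` of the interpolant, `∑_a f_a / ∏_{b ≠ a} (y_a - y_b)`, and `(-1)^(r+1) K_a` is exactly
the weight `1 / ∏_{b ≠ a} (y_a - y_b)`.
-/

open Polynomial Finset Matrix

namespace Polynomial.Chebyshev

variable {R : Type*} [CommRing R] [Nontrivial R]

theorem natDegree_C_natCast : ∀ n : ℕ, (C R n).natDegree = n
  | 0 => by simp
  | 1 => by simp
  | n + 2 => by
    have ih := natDegree_C_natCast (n + 1)
    push_cast at ih ⊢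
    have hne : C R (n + 1) ≠ 0 := ne_zero_of_natDegree_gt (n := 0) (by omega)
    rw [C_add_two, natDegree_sub_eq_left_of_natDegree_lt] <;>
      rw [natDegree_X_mul hne, ih]
    rw [natDegree_C_natCast n]
    omega

theorem natDegree_C (n : ℤ) : (C R n).natDegree = n.natAbs := by
  rw [← C_natAbs, natDegree_C_natCast]

theorem monic_C_natCast_succ : ∀ n : ℕ, (C R (n + 1 : ℕ)).Monic
  | 0 => by simp
  | n + 1 => by
    have ih := monic_C_natCast_succ n
    push_cast at ih ⊢
    rw [add_assoc, one_add_one_eq_two, C_add_two]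
    refine (monic_X.mul ih).sub_of_left (degree_lt_degree ?_)
    rw [natDegree_X_mul ih.ne_zero, natDegree_C, natDegree_C]
    omega

theorem monic_C {n : ℤ} (hn : n ≠ 0) : (C R n).Monic := by
  obtain ⟨k, hk⟩ := Nat.exists_eq_succ_of_ne_zero (Int.natAbs_ne_zero.2 hn)
  rw [← C_natAbs, hk]
  exact monic_C_natCast_succ k

theorem C_eval_add_inv {K : Type*} [Field K] {x : K} (hx : x ≠ 0) (n : ℤ) :
    (C K n).eval (x + x⁻¹) = x ^ n + x ^ (-n) := by
  have hnat (k : ℕ) : (C K k).eval (x + x⁻¹) = x ^ k + x⁻¹ ^ k := by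
    rw [← dickson_one_one_eq_chebyshev_C, dickson_one_one_eval_add_inv _ _ (mul_inv_cancel₀ hx)]
  obtain ⟨k, rfl | rfl⟩ := Int.eq_nat_or_neg n
  · simp [hnat]
  · rw [C_neg, hnat]; simp [add_comm]

end Polynomial.Chebyshev

theorem Matrix.det_updateCol_mulVec {n R : Type*} [Fintype n] [DecidableEq n] [CommRing R]
    (A : Matrix n n R) (j : n) (c : n → R) : (A.updateCol j (A *ᵥ c)).det = A.det * c j := by
  rw [← cramer_apply, cramer_eq_adjugate_mulVec, mulVec_mulVec, adjugate_mul, smul_mulVec,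
    one_mulVec, Pi.smul_apply, smul_eq_mul]

theorem add_inv_eq_add_inv_iff {K : Type*} [Field K] {x z : K} (hx : x ≠ 0) (hz : z ≠ 0) :
    x + x⁻¹ = z + z⁻¹ ↔ x = z ∨ x * z = 1 := by
  have : (x + x⁻¹ - (z + z⁻¹)) * (x * z) = (x - z) * (x * z - 1) := by field_simp; ring
  rw [← sub_eq_zero, ← mul_eq_zero_iff_right (mul_ne_zero hx hz), this, mul_eq_zero, sub_eq_zero,
    sub_eq_zero]

theorem div_sub_mul_sub_inv_eq_neg_inv {K : Type*} [Field K] {x z : K} (hx : x ≠ 0) (hz : z ≠ 0) :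
    z / ((z - x) * (z - x⁻¹)) = -((x + x⁻¹) - (z + z⁻¹))⁻¹ := by
  have : (z - x) * (z - x⁻¹) = z * ((z + z⁻¹) - (x + x⁻¹)) := by field_simp; ring
  rw [this, div_mul_cancel_left₀ hz, ← inv_neg, neg_sub]

section

variable {F : Type*} [Field F] {r : ℕ}

/-- Under `y = x + x⁻¹` this is the matrix `(x_a^(r-1-b) + x_a^(-(r-1-b)))_{a,b}` of `D`. -/
noncomputable def chebyshevCMatrix (y : Fin r → F) : Matrix (Fin r) (Fin r) F :=
  of fun a b => (Chebyshev.C F ((r : ℤ) - 1 - (b : ℕ))).eval (y a)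

theorem det_chebyshevCMatrix_ne_zero [NeZero (2 : F)] {y : Fin r → F}
    (hy : Function.Injective y) : (chebyshevCMatrix y).det ≠ 0 := by
  let p : Fin r → F[X] := fun b => if (b : ℕ) = 0 then 1 else Chebyshev.C F b
  let d : Fin r → F := fun b => if (b : ℕ) = 0 then 2 else 1
  have hrev : (chebyshevCMatrix y).submatrix id Fin.revPerm =
      of fun a b => d b * (p b).eval (y a) := by
    ext a b
    have : (r : ℤ) - 1 - (Fin.rev b : ℕ) = (b : ℕ) := by rw [Fin.val_rev]; omega
    simp only [chebyshevCMatrix, submatrix_apply, of_apply, id, Fin.revPerm_apply, this]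
    by_cases hb : (b : ℕ) = 0 <;> simp [hb, d, p]
  have hvdm : (vandermonde y).det = (of fun a b => (p b).eval (y a)).det := by
    refine det_eval_matrixOfPolynomials_eq_det_vandermonde y p (fun b => ?_) (fun b => ?_) <;>
      by_cases hb : (b : ℕ) = 0 <;> simp [p, hb, Chebyshev.natDegree_C, Chebyshev.monic_C]
  have hd : ∏ b, d b ≠ 0 := prod_ne_zero_iff.2 fun b _ => by
    by_cases hb : (b : ℕ) = 0 <;> simp [d, hb, two_ne_zero]
  have hrow := det_mul_row d (of fun a b => (p b).eval (y a))
  simp only [of_apply] at hrow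
  have hperm := det_permute' Fin.revPerm (chebyshevCMatrix y)
  rw [hrev, hrow, ← hvdm] at hperm
  intro h
  rw [h, mul_zero] at hperm
  exact mul_ne_zero hd (det_vandermonde_ne_zero_iff.2 hy) hperm

theorem det_updateCol_chebyshevCMatrix [NeZero (2 : F)] (hr : 2 ≤ r) {y : Fin r → F}
    (hy : Function.Injective y) (f : Fin r → F) :
    ((chebyshevCMatrix y).updateCol ⟨0, by omega⟩ f).det =
      (chebyshevCMatrix y).det * ∑ a, f a / ∏ b ∈ univ.erase a, (y a - y b) := by
  set M := chebyshevCMatrix y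
  set c := M⁻¹ *ᵥ f
  have hc : M *ᵥ c = f := by
    rw [mulVec_mulVec, mul_nonsing_inv _ (isUnit_iff_ne_zero.2 (det_chebyshevCMatrix_ne_zero hy)),
      one_mulVec]
  set q : F[X] := ∑ b, Polynomial.C (c b) * Chebyshev.C F ((r : ℤ) - 1 - (b : ℕ))
  have hq_eval (a : Fin r) : q.eval (y a) = f a := by
    simp only [← hc, q, M, eval_finsetSum, eval_mul, eval_C, mulVec, dotProduct,
      chebyshevCMatrix, of_apply, mul_comm]
  have hq_natDegree : q.natDegree ≤ r - 1 := by
    refine natDegree_sum_le_of_forall_le _ _ fun b _ => (natDegree_C_mul_le _ _).trans ?_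
    rw [Chebyshev.natDegree_C]
    omega
  have hq_deg : q.degree < r :=
    (degree_le_of_natDegree_le hq_natDegree).trans_lt (by exact_mod_cast (by omega : r - 1 < r))
  have hq_coeff : q.coeff (r - 1) = c ⟨0, by omega⟩ := by
    rw [finsetSum_coeff, sum_eq_single ⟨0, by omega⟩]
    · have hmonic := Chebyshev.monic_C (R := F) (n := (r : ℤ) - 1) (by omega)
      have hdeg : (Chebyshev.C F ((r : ℤ) - 1)).natDegree = r - 1 := by
        rw [Chebyshev.natDegree_C]; omega
      rw [coeff_C_mul, Fin.val_mk, Nat.cast_zero, sub_zero, ← hdeg, hmonic.coeff_natDegree,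
        mul_one]
    · intro b _ hb
      have : (b : ℕ) ≠ 0 := fun h => hb (Fin.ext h)
      rw [coeff_C_mul, coeff_eq_zero_of_natDegree_lt, mul_zero]
      rw [Chebyshev.natDegree_C]
      omega
    · simp
  have := Lagrange.coeff_eq_sum (s := univ) hy.injOn (by simpa using hq_deg)
  simp only [card_univ, Fintype.card_fin, hq_eval, hq_coeff] at this
  rw [← this, ← det_updateCol_mulVec, hc]

end

/-- **Determinant character formula for the symmetric traceless tensor
T-functions of `so(2r)`.**  Let `r ≥ 2` and let `x_1, …, x_r` be nonzero complex numbers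
with `x_a ≠ x_b` and `x_a·x_b ≠ 1` for all `a ≠ b`, and set
`K_a := ∏_{b ≠ a} x_b / ((x_b − x_a)(x_b − x_a⁻¹))`.  Then the denominator determinant
`D := det_{1≤a,b≤r}( x_a^{r−b} + x_a^{−(r−b)} )` is nonzero, and for every integer
`s ≥ 0`,
`(−1)^{r+1}·∑_{a=1}^r K_a·( x_a^{s+r−1} + x_a^{−(s+r−1)} ) = N_s / D`, where
`N_s := det_{1≤a,b≤r}( x_a^{c_b} + x_a^{−c_b} )` with exponents `c_1 = r−1+s` and
`c_b = r−b` for `2 ≤ b ≤ r`.  (Here rows and columns are indexed by `Fin r`, with the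
column index shifted by one, so `c` is `r−1+s` at the first column and `r−1−b` at the
zero-based column `b ≥ 1`.) -/
theorem Dr_symmetric_traceless_character (r : ℕ) (hr : 2 ≤ r)
    (x : Fin r → ℂ) (hx0 : ∀ a, x a ≠ 0)
    (hx1 : ∀ a b : Fin r, a ≠ b → x a ≠ x b)
    (hx2 : ∀ a b : Fin r, a ≠ b → x a * x b ≠ 1)
    (K : Fin r → ℂ)
    (hK : ∀ a, K a = ∏ b ∈ Finset.univ.erase a,
      x b / ((x b - x a) * (x b - (x a)⁻¹)))
    (D : ℂ)
    (hD : D = Matrix.det (Matrix.of fun a b : Fin r =>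
      x a ^ ((r : ℤ) - 1 - (b : ℕ)) + x a ^ (-((r : ℤ) - 1 - (b : ℕ))))) :
    D ≠ 0 ∧
    ∀ s : ℤ, 0 ≤ s →
      (-1) ^ (r + 1) *
        (∑ a, K a * (x a ^ (s + (r : ℤ) - 1) + x a ^ (-(s + (r : ℤ) - 1))))
      = Matrix.det (Matrix.of fun a b : Fin r =>
          x a ^ (if (b : ℕ) = 0 then (r : ℤ) - 1 + s else (r : ℤ) - 1 - (b : ℕ)) +
          x a ^ (-(if (b : ℕ) = 0 then (r : ℤ) - 1 + s else (r : ℤ) - 1 - (b : ℕ)))) / D := by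
  set y : Fin r → ℂ := fun a => x a + (x a)⁻¹
  have hy : Function.Injective y := fun a b hab => by
    by_contra hne
    rcases (add_inv_eq_add_inv_iff (hx0 a) (hx0 b)).1 hab with h | h
    exacts [hx1 a b hne h, hx2 a b hne h]
  have hentry (a : Fin r) (k : ℤ) : x a ^ k + x a ^ (-k) = (Chebyshev.C ℂ k).eval (y a) :=
    (Chebyshev.C_eval_add_inv (hx0 a) k).symm
  have hK' (a : Fin r) : (-1) ^ (r + 1) * K a = (∏ b ∈ univ.erase a, (y a - y b))⁻¹ := by
    rw [hK, prod_congr rfl fun b _ => div_sub_mul_sub_inv_eq_neg_inv (hx0 a) (hx0 b), prod_neg,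
      card_erase_of_mem (mem_univ a), card_univ, Fintype.card_fin, prod_inv_distrib, ← mul_assoc,
      ← pow_add, show r + 1 + (r - 1) = 2 * r by omega, pow_mul, neg_one_sq, one_pow, one_mul]
  have hD' : D = (chebyshevCMatrix y).det := by simp only [hD, hentry]; rfl
  have hDne : D ≠ 0 := hD' ▸ det_chebyshevCMatrix_ne_zero hy
  refine ⟨hDne, fun s _ => ?_⟩
  have hN : (of fun a b : Fin r => (Chebyshev.C ℂ (if (b : ℕ) = 0 then (r : ℤ) - 1 + s
      else (r : ℤ) - 1 - (b : ℕ))).eval (y a)) = (chebyshevCMatrix y).updateCol ⟨0, by omega⟩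
        fun a => (Chebyshev.C ℂ ((r : ℤ) - 1 + s)).eval (y a) := by
    ext a b
    by_cases hb : (b : ℕ) = 0 <;> simp [chebyshevCMatrix, updateCol_apply, hb, Fin.ext_iff]
  rw [show s + (r : ℤ) - 1 = r - 1 + s by ring]
  simp only [hentry]
  rw [hN, det_updateCol_chebyshevCMatrix hr hy, ← hD', mul_div_cancel_left₀ _ hDne, mul_sum]
  refine sum_congr rfl fun a _ => ?_
  rw [← mul_assoc, hK', div_eq_inv_mul, mul_comm]
end

section
/- (Discrete Wronskian QQ-relation / Desnanot–Jacobi identity for shifted Wronskians.) Let η ∈ ℂ be nonzero and f_1, …, f_m : ℂ → ℂ. For a finite tuple A = (c_1, …, c_k) of indices from {1, …, m} define Q_A(z) := det_{1≤i,j≤k}( f_{c_i}( z + (k+1−2j)·η/2 ) ), with Q_∅ := 1, and let Aa denote the tuple A with the index a appended. Then for any tuple A and any indices a, b ∈ {1, …, m} and all z ∈ ℂ: Q_{Aa}^{[1]}(z)·Q_{Ab}^{[-1]}(z) − Q_{Ab}^{[1]}(z)·Q_{Aa}^{[-1]}(z) = Q_A(z)·Q_{Aab}(z). -/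
open Matrix Polynomial

namespace WQQ
variable {R S : Type*} [CommRing R] [CommRing S]

lemma det_map' {ι : Type*} [Fintype ι] [DecidableEq ι] (φ : R →+* S) (M : Matrix ι ι R) :
    (M.map φ).det = φ M.det := by
  rw [← RingHom.mapMatrix_apply, ← RingHom.map_det]

def cB {n : ℕ} (F : Matrix (Fin n) (Fin 2) R) (t : Fin 2) : Matrix (Fin n) (Fin 1) R :=
  Matrix.of fun i _ => F i t
def rB {n : ℕ} (G : Matrix (Fin 2) (Fin n) R) (s : Fin 2) : Matrix (Fin 1) (Fin n) R :=
  Matrix.of fun _ j => G s j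
def eB (H : Matrix (Fin 2) (Fin 2) R) (s t : Fin 2) : Matrix (Fin 1) (Fin 1) R :=
  Matrix.of fun _ _ => H s t

lemma dodgson_unit {n : ℕ} (E : Matrix (Fin n) (Fin n) R) (F : Matrix (Fin n) (Fin 2) R)
    (G : Matrix (Fin 2) (Fin n) R) (H : Matrix (Fin 2) (Fin 2) R) (hE : IsUnit E.det) :
    (Matrix.fromBlocks E (cB F 0) (rB G 0) (eB H 0 0)).det
      * (Matrix.fromBlocks E (cB F 1) (rB G 1) (eB H 1 1)).det
    - (Matrix.fromBlocks E (cB F 0) (rB G 1) (eB H 1 0)).det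
      * (Matrix.fromBlocks E (cB F 1) (rB G 0) (eB H 0 1)).det
    = E.det * (Matrix.fromBlocks E F G H).det := by
  have : Invertible E := E.invertibleOfIsUnitDet hE
  have hd : ∀ s t : Fin 2,
      (Matrix.fromBlocks E (cB F t) (rB G s) (eB H s t)).det
        = E.det * (H - G * ⅟E * F) s t := by
    intro s t
    rw [Matrix.det_fromBlocks₁₁]
    congr 1
    rw [Matrix.det_fin_one]
    simp [cB, rB, eB, Matrix.mul_apply, Matrix.sub_apply, Finset.sum_mul, Finset.mul_sum]
  rw [hd 0 0, hd 1 1, hd 1 0, hd 0 1, Matrix.det_fromBlocks₁₁,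
    Matrix.det_fin_two (H - G * ⅟E * F)]
  ring

lemma map_block_det {n : ℕ} (φ : R →+* S) (E : Matrix (Fin n) (Fin n) R)
    (F : Matrix (Fin n) (Fin 2) R) (G : Matrix (Fin 2) (Fin n) R) (H : Matrix (Fin 2) (Fin 2) R)
    (s t : Fin 2) :
    (Matrix.fromBlocks (E.map φ) (cB (F.map φ) t) (rB (G.map φ) s) (eB (H.map φ) s t)).det
      = φ ((Matrix.fromBlocks E (cB F t) (rB G s) (eB H s t)).det) := by
  rw [← det_map']
  congr 1
  rw [Matrix.fromBlocks_map]
  congr 1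

lemma map_full_det {n₁ n₂ : ℕ} (φ : R →+* S) (E : Matrix (Fin n₁) (Fin n₁) R)
    (F : Matrix (Fin n₁) (Fin n₂) R) (G : Matrix (Fin n₂) (Fin n₁) R)
    (H : Matrix (Fin n₂) (Fin n₂) R) :
    (Matrix.fromBlocks (E.map φ) (F.map φ) (G.map φ) (H.map φ)).det
      = φ ((Matrix.fromBlocks E F G H).det) := by
  rw [← det_map', Matrix.fromBlocks_map]

lemma dodgson {n : ℕ} (E : Matrix (Fin n) (Fin n) ℂ) (F : Matrix (Fin n) (Fin 2) ℂ)
    (G : Matrix (Fin 2) (Fin n) ℂ) (H : Matrix (Fin 2) (Fin 2) ℂ) :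
    (Matrix.fromBlocks E (cB F 0) (rB G 0) (eB H 0 0)).det
      * (Matrix.fromBlocks E (cB F 1) (rB G 1) (eB H 1 1)).det
    - (Matrix.fromBlocks E (cB F 0) (rB G 1) (eB H 1 0)).det
      * (Matrix.fromBlocks E (cB F 1) (rB G 0) (eB H 0 1)).det
    = E.det * (Matrix.fromBlocks E F G H).det := by
  let ι : ℂ[X] →+* FractionRing ℂ[X] := algebraMap ℂ[X] (FractionRing ℂ[X])
  have hinj : Function.Injective ι := IsFractionRing.injective ℂ[X] (FractionRing ℂ[X])
  set Ep : Matrix (Fin n) (Fin n) ℂ[X] := Matrix.charmatrix (-E) with hEpdef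
  have hEp : Ep.det ≠ 0 := by
    have h := Matrix.charpoly_monic (-E)
    rw [Matrix.charpoly] at h
    exact h.ne_zero
  have hu : IsUnit (Ep.map ι).det := by
    rw [det_map']
    exact isUnit_iff_ne_zero.mpr ((map_ne_zero_iff ι hinj).mpr hEp)
  have h1 := dodgson_unit (Ep.map ι) ((F.map C).map ι) ((G.map C).map ι) ((H.map C).map ι) hu
  have hR :
      (fromBlocks Ep (cB (F.map C) 0) (rB (G.map C) 0) (eB (H.map C) 0 0)).det
        * (fromBlocks Ep (cB (F.map C) 1) (rB (G.map C) 1) (eB (H.map C) 1 1)).det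
      - (fromBlocks Ep (cB (F.map C) 0) (rB (G.map C) 1) (eB (H.map C) 1 0)).det
        * (fromBlocks Ep (cB (F.map C) 1) (rB (G.map C) 0) (eB (H.map C) 0 1)).det
      = Ep.det * (fromBlocks Ep (F.map C) (G.map C) (H.map C)).det := by
    apply hinj
    rw [_root_.map_sub ι, _root_.map_mul ι, _root_.map_mul ι, _root_.map_mul ι,
      ← map_block_det ι Ep (F.map C) (G.map C) (H.map C) 0 0,
      ← map_block_det ι Ep (F.map C) (G.map C) (H.map C) 1 1,
      ← map_block_det ι Ep (F.map C) (G.map C) (H.map C) 1 0,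
      ← map_block_det ι Ep (F.map C) (G.map C) (H.map C) 0 1,
      ← map_full_det ι Ep (F.map C) (G.map C) (H.map C), ← det_map' ι Ep]
    exact h1
  let ev : ℂ[X] →+* ℂ := Polynomial.evalRingHom 0
  have h2 := congrArg ev hR
  rw [map_sub, _root_.map_mul, _root_.map_mul, _root_.map_mul,
    ← map_block_det ev Ep (F.map C) (G.map C) (H.map C) 0 0,
    ← map_block_det ev Ep (F.map C) (G.map C) (H.map C) 1 1,
    ← map_block_det ev Ep (F.map C) (G.map C) (H.map C) 1 0,
    ← map_block_det ev Ep (F.map C) (G.map C) (H.map C) 0 1,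
    ← map_full_det ev Ep (F.map C) (G.map C) (H.map C),
    ← det_map'] at h2
  have hEe : Ep.map ev = E := by
    ext i j
    by_cases h : i = j
    · subst h
      simp only [hEpdef, Matrix.map_apply, Matrix.charmatrix_apply_eq, ev, Matrix.neg_apply,
        map_sub, map_neg]
      simp
    · simp only [hEpdef, Matrix.map_apply, Matrix.charmatrix_apply_ne _ _ _ h, ev,
        Matrix.neg_apply, map_neg]
      simp
  have hFe : (F.map C).map ev = F := by ext i j; simp [Matrix.map_apply, ev]
  have hGe : (G.map C).map ev = G := by ext i j; simp [Matrix.map_apply, ev]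
  have hHe : (H.map C).map ev = H := by ext i j; simp [Matrix.map_apply, ev]
  rw [hEe, hFe, hGe, hHe] at h2
  exact h2

end WQQ


/-- The shifted discrete Wronskian Q-function attached to a tuple `A = (c_1, …, c_k)` of
indices: `Q_A(z) := det_{1≤i,j≤k}( f_{c_i}( z + (k+1−2j)·η/2 ) )`, with `Q_∅ = 1` (the
determinant of the empty matrix).  Here the rows/columns are indexed by `Fin k` (zero
based), so the shift in the zero-based column `j` is `k − 1 − 2j`. -/
noncomputable def QW (η : ℂ) {m : ℕ} (f : Fin m → ℂ → ℂ) (A : List (Fin m)) (z : ℂ) : ℂ :=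
  Matrix.det (Matrix.of fun i j : Fin A.length =>
    f (A.get i) (z + ((A.length : ℂ) - 1 - 2 * ((j : ℕ) : ℂ)) * η / 2))

/-- **Discrete Wronskian QQ-relation / Desnanot–Jacobi identity for shifted
Wronskians.**  Fix a nonzero step `η ∈ ℂ` and write `f^{[n]}(z) := f(z + n·η/2)`.  Let
`f_1, …, f_m : ℂ → ℂ` and let `Q_A` be the shifted discrete Wronskians of tuples of
indices as above, with `Aa` denoting the tuple `A` with the index `a` appended.  Then for
any tuple `A`, any indices `a, b`, and all `z`:
`Q_{Aa}^{[1]}(z)·Q_{Ab}^{[-1]}(z) − Q_{Ab}^{[1]}(z)·Q_{Aa}^{[-1]}(z) = Q_A(z)·Q_{Aab}(z)`. -/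
theorem wronskian_QQ_relation (η : ℂ) (hη : η ≠ 0) (m : ℕ) (f : Fin m → ℂ → ℂ) :
    ∀ (A : List (Fin m)) (a b : Fin m) (z : ℂ),
      QW η f (A ++ [a]) (z + η / 2) * QW η f (A ++ [b]) (z - η / 2)
        - QW η f (A ++ [b]) (z + η / 2) * QW η f (A ++ [a]) (z - η / 2)
      = QW η f A z * QW η f (A ++ [a, b]) z := by
  intro A a b z
  classical
  set n := A.length with hn
  have key : ∀ (k : ℕ) (l : List (Fin m)) (w : ℂ) (hl : l.length = k)
      (N : Matrix (Fin k) (Fin k) ℂ),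
      (∀ i j : Fin k, N i j
        = f (l.get (Fin.cast hl.symm i)) (w + (((k : ℕ) : ℂ) - 1 - 2 * ((j : ℕ) : ℂ)) * η / 2)) →
      QW η f l w = N.det := by
    intro k l w hl N hN
    subst hl
    show (Matrix.of fun i j : Fin l.length =>
      f (l.get i) (w + ((l.length : ℂ) - 1 - 2 * ((j : ℕ) : ℂ)) * η / 2)).det = N.det
    congr 1
    ext i j
    rw [hN i j]
    rfl
  set ex : Fin 2 → ℂ := ![(n : ℂ) + 1, -((n : ℂ) + 1)] with hex
  set pk : Fin 2 → Fin m := ![a, b] with hpk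
  set E : Matrix (Fin n) (Fin n) ℂ :=
    Matrix.of (fun i j => f (A.get i) (z + ((n : ℂ) - 1 - 2 * ((j : ℕ) : ℂ)) * η / 2)) with hE
  set F : Matrix (Fin n) (Fin 2) ℂ :=
    Matrix.of (fun i t => f (A.get i) (z + ex t * η / 2)) with hF
  set G : Matrix (Fin 2) (Fin n) ℂ :=
    Matrix.of (fun s j => f (pk s) (z + ((n : ℂ) - 1 - 2 * ((j : ℕ) : ℂ)) * η / 2)) with hG
  set H : Matrix (Fin 2) (Fin 2) ℂ :=
    Matrix.of (fun s t => f (pk s) (z + ex t * η / 2)) with hH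
  have hA : QW η f A z = E.det := by
    refine key n A z hn.symm E ?_
    intro i j
    rfl
  have fin2 : ∀ t : Fin 2, t = 0 ∨ t = 1 := by decide
  -- the "+1"-shifted minors
  have hplus : ∀ s : Fin 2, QW η f (A ++ [pk s]) (z + η / 2)
      = (-1 : ℂ) ^ n
        * (Matrix.fromBlocks E (WQQ.cB F 0) (WQQ.rB G s) (WQQ.eB H s 0)).det := by
    intro s
    have hlen : (A ++ [pk s]).length = n + 1 := by simp [hn]
    set π : Equiv.Perm (Fin (n + 1)) := Fin.cycleRange (Fin.last n) with hπ
    set B : Matrix (Fin n ⊕ Fin 1) (Fin n ⊕ Fin 1) ℂ :=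
      Matrix.fromBlocks E (WQQ.cB F 0) (WQQ.rB G s) (WQQ.eB H s 0) with hB
    have hval1 : ∀ j0 : Fin n,
        π (finSumFinEquiv (Sum.inl j0)) = (⟨j0.val + 1, by omega⟩ : Fin (n + 1)) := by
      intro j0
      rw [hπ, finSumFinEquiv_apply_left, Fin.cycleRange_of_lt (by simp [Fin.lt_def])]
      apply Fin.ext
      rw [Fin.val_add_one_of_lt (by simp [Fin.lt_def])]
      simp
    have hval2 : π (finSumFinEquiv (Sum.inr (0 : Fin 1))) = 0 := by
      rw [show (finSumFinEquiv (Sum.inr (0 : Fin 1)) : Fin (n + 1)) = Fin.last n by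
        apply Fin.ext; simp]
      rw [hπ, Fin.cycleRange_self]
    have hrow1 : ∀ i0 : Fin n,
        (A ++ [pk s]).get (Fin.cast hlen.symm (finSumFinEquiv (Sum.inl i0))) = A.get i0 := by
      intro i0
      simp only [List.get_eq_getElem, Fin.coe_cast, finSumFinEquiv_apply_left, Fin.coe_castAdd]
      exact List.getElem_append_left i0.isLt
    have hrow2 : (A ++ [pk s]).get (Fin.cast hlen.symm (finSumFinEquiv (Sum.inr (0 : Fin 1))))
        = pk s := by
      simp only [List.get_eq_getElem, Fin.coe_cast, finSumFinEquiv_apply_right, Fin.natAdd_zero]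
      rw [List.getElem_append_right (by simp [hn])]
      simp [hn]
    have h1 : QW η f (A ++ [pk s]) (z + η / 2)
        = (((B.submatrix ⇑finSumFinEquiv.symm ⇑finSumFinEquiv.symm).submatrix id ⇑π.symm)).det := by
      refine key (n + 1) _ _ hlen _ ?_
      intro i j
      obtain ⟨i', rfl⟩ := finSumFinEquiv.surjective i
      obtain ⟨j', rfl⟩ := (finSumFinEquiv.trans (π : Equiv.Perm (Fin (n + 1)))).surjective j
      simp only [Equiv.trans_apply, Matrix.submatrix_apply, id_eq, Equiv.symm_apply_apply]
      rcases i' with i0 | i1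
      · rcases j' with j0 | j1
        · show E i0 j0 = _
          rw [hrow1, hval1, hE]
          show f (A.get i0) _ = f (A.get i0) _
          congr 1
          push_cast [Fin.val_zero]
          ring
        · obtain rfl : j1 = 0 := Subsingleton.elim _ _
          show (WQQ.cB F 0) i0 0 = _
          rw [hrow1, hval2, hF]
          show f (A.get i0) (z + ex 0 * η / 2) = f (A.get i0) _
          congr 1
          rw [hex]
          show z + ((n : ℂ) + 1) * η / 2 = _
          push_cast [Fin.val_zero]
          ring
      · obtain rfl : i1 = 0 := Subsingleton.elim _ _
        rcases j' with j0 | j1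
        · show (WQQ.rB G s) 0 j0 = _
          rw [hrow2, hval1, hG]
          show f (pk s) _ = f (pk s) _
          congr 1
          push_cast [Fin.val_zero]
          ring
        · obtain rfl : j1 = 0 := Subsingleton.elim _ _
          show (WQQ.eB H s 0) 0 0 = _
          rw [hrow2, hval2, hH]
          show f (pk s) (z + ex 0 * η / 2) = f (pk s) _
          congr 1
          rw [hex]
          show z + ((n : ℂ) + 1) * η / 2 = _
          push_cast [Fin.val_zero]
          ring
    rw [h1, Matrix.det_permute' π.symm, Matrix.det_submatrix_equiv_self]
    congr 1
    rw [Equiv.Perm.sign_symm, hπ, Fin.sign_cycleRange]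
    push_cast [Fin.val_last]
    ring
  -- the "-1"-shifted minors
  have hminus : ∀ s : Fin 2, QW η f (A ++ [pk s]) (z - η / 2)
      = (Matrix.fromBlocks E (WQQ.cB F 1) (WQQ.rB G s) (WQQ.eB H s 1)).det := by
    intro s
    have hlen : (A ++ [pk s]).length = n + 1 := by simp [hn]
    set B : Matrix (Fin n ⊕ Fin 1) (Fin n ⊕ Fin 1) ℂ :=
      Matrix.fromBlocks E (WQQ.cB F 1) (WQQ.rB G s) (WQQ.eB H s 1) with hB
    have hrow1 : ∀ i0 : Fin n,
        (A ++ [pk s]).get (Fin.cast hlen.symm (finSumFinEquiv (Sum.inl i0))) = A.get i0 := by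
      intro i0
      simp only [List.get_eq_getElem, Fin.coe_cast, finSumFinEquiv_apply_left, Fin.coe_castAdd]
      exact List.getElem_append_left i0.isLt
    have hrow2 : (A ++ [pk s]).get (Fin.cast hlen.symm (finSumFinEquiv (Sum.inr (0 : Fin 1))))
        = pk s := by
      simp only [List.get_eq_getElem, Fin.coe_cast, finSumFinEquiv_apply_right]
      rw [List.getElem_append_right (by simp [hn])]
      simp [hn]
    have h1 : QW η f (A ++ [pk s]) (z - η / 2)
        = ((B.submatrix ⇑finSumFinEquiv.symm ⇑finSumFinEquiv.symm)).det := by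
      refine key (n + 1) _ _ hlen _ ?_
      intro i j
      obtain ⟨i', rfl⟩ := finSumFinEquiv.surjective i
      obtain ⟨j', rfl⟩ := finSumFinEquiv.surjective j
      simp only [Matrix.submatrix_apply, Equiv.symm_apply_apply]
      rcases i' with i0 | i1
      · rcases j' with j0 | j1
        · show E i0 j0 = _
          rw [hrow1, hE]
          show f (A.get i0) _ = f (A.get i0) _
          congr 1
          have : ((finSumFinEquiv (Sum.inl j0) : Fin (n + 1)) : ℕ) = (j0 : ℕ) := by simp
          rw [this]
          push_cast [Fin.val_zero]
          ring
        · obtain rfl : j1 = 0 := Subsingleton.elim _ _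
          show (WQQ.cB F 1) i0 0 = _
          rw [hrow1, hF]
          show f (A.get i0) (z + ex 1 * η / 2) = f (A.get i0) _
          congr 1
          have : ((finSumFinEquiv (Sum.inr (0 : Fin 1)) : Fin (n + 1)) : ℕ) = n := by simp
          rw [this, hex]
          show z + (-((n : ℂ) + 1)) * η / 2 = _
          push_cast [Fin.val_zero]
          ring
      · obtain rfl : i1 = 0 := Subsingleton.elim _ _
        rcases j' with j0 | j1
        · show (WQQ.rB G s) 0 j0 = _
          rw [hrow2, hG]
          show f (pk s) _ = f (pk s) _
          congr 1
          have : ((finSumFinEquiv (Sum.inl j0) : Fin (n + 1)) : ℕ) = (j0 : ℕ) := by simp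
          rw [this]
          push_cast [Fin.val_zero]
          ring
        · obtain rfl : j1 = 0 := Subsingleton.elim _ _
          show (WQQ.eB H s 1) 0 0 = _
          rw [hrow2, hH]
          show f (pk s) (z + ex 1 * η / 2) = f (pk s) _
          congr 1
          have : ((finSumFinEquiv (Sum.inr (0 : Fin 1)) : Fin (n + 1)) : ℕ) = n := by simp
          rw [this, hex]
          show z + (-((n : ℂ) + 1)) * η / 2 = _
          push_cast [Fin.val_zero]
          ring
    rw [h1, Matrix.det_submatrix_equiv_self]
  -- the big determinant
  have hbig : QW η f (A ++ [a, b]) z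
      = (-1 : ℂ) ^ n * (Matrix.fromBlocks E F G H).det := by
    have hlen : (A ++ [a, b]).length = n + 2 := by simp [hn]
    set π : Equiv.Perm (Fin (n + 2)) := Fin.cycleRange (⟨n, by omega⟩ : Fin (n + 2)) with hπ
    set B : Matrix (Fin n ⊕ Fin 2) (Fin n ⊕ Fin 2) ℂ := Matrix.fromBlocks E F G H with hB
    have hval1 : ∀ j0 : Fin n,
        π (finSumFinEquiv (Sum.inl j0)) = (⟨j0.val + 1, by omega⟩ : Fin (n + 2)) := by
      intro j0
      rw [hπ, finSumFinEquiv_apply_left, Fin.cycleRange_of_lt (by simp [Fin.lt_def])]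
      apply Fin.ext
      rw [Fin.val_add_one_of_lt (by simp [Fin.lt_def])]
      simp
    have hval2 : π (finSumFinEquiv (Sum.inr (0 : Fin 2))) = 0 := by
      rw [show (finSumFinEquiv (Sum.inr (0 : Fin 2)) : Fin (n + 2)) = ⟨n, by omega⟩ by
        apply Fin.ext; simp]
      rw [hπ, Fin.cycleRange_self]
    have hval3 : π (finSumFinEquiv (Sum.inr (1 : Fin 2))) = (⟨n + 1, by omega⟩ : Fin (n + 2)) := by
      rw [show (finSumFinEquiv (Sum.inr (1 : Fin 2)) : Fin (n + 2)) = ⟨n + 1, by omega⟩ by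
        apply Fin.ext; simp]
      rw [hπ, Fin.cycleRange_of_gt (by simp [Fin.lt_def])]
    have hrow1 : ∀ i0 : Fin n,
        (A ++ [a, b]).get (Fin.cast hlen.symm (finSumFinEquiv (Sum.inl i0))) = A.get i0 := by
      intro i0
      simp only [List.get_eq_getElem, Fin.coe_cast, finSumFinEquiv_apply_left, Fin.coe_castAdd]
      exact List.getElem_append_left i0.isLt
    have hrow2 : (A ++ [a, b]).get (Fin.cast hlen.symm (finSumFinEquiv (Sum.inr (0 : Fin 2))))
        = a := by
      simp only [List.get_eq_getElem, Fin.coe_cast, finSumFinEquiv_apply_right]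
      rw [List.getElem_append_right (by simp [hn])]
      simp [hn]
    have hrow3 : (A ++ [a, b]).get (Fin.cast hlen.symm (finSumFinEquiv (Sum.inr (1 : Fin 2))))
        = b := by
      simp only [List.get_eq_getElem, Fin.coe_cast, finSumFinEquiv_apply_right]
      rw [List.getElem_append_right (by simp [hn])]
      simp [hn]
    have h1 : QW η f (A ++ [a, b]) z
        = (((B.submatrix ⇑finSumFinEquiv.symm ⇑finSumFinEquiv.symm).submatrix id ⇑π.symm)).det := by
      refine key (n + 2) _ _ hlen _ ?_
      intro i j
      obtain ⟨i', rfl⟩ := finSumFinEquiv.surjective i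
      obtain ⟨j', rfl⟩ := (finSumFinEquiv.trans (π : Equiv.Perm (Fin (n + 2)))).surjective j
      simp only [Equiv.trans_apply, Matrix.submatrix_apply, id_eq, Equiv.symm_apply_apply]
      rcases i' with i0 | i1
      · rcases j' with j0 | j1
        · show E i0 j0 = _
          rw [hrow1, hval1, hE]
          show f (A.get i0) _ = f (A.get i0) _
          congr 1
          push_cast [Fin.val_zero]
          ring
        · rcases fin2 j1 with rfl | rfl
          · show F i0 0 = _
            rw [hrow1, hval2, hF]
            show f (A.get i0) (z + ex 0 * η / 2) = f (A.get i0) _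
            congr 1
            rw [hex]
            show z + ((n : ℂ) + 1) * η / 2 = _
            push_cast [Fin.val_zero]
            ring
          · show F i0 1 = _
            rw [hrow1, hval3, hF]
            show f (A.get i0) (z + ex 1 * η / 2) = f (A.get i0) _
            congr 1
            rw [hex]
            show z + (-((n : ℂ) + 1)) * η / 2 = _
            push_cast [Fin.val_zero]
            ring
      · rcases j' with j0 | j1
        · rcases fin2 i1 with rfl | rfl
          · show G 0 j0 = _
            rw [hrow2, hval1, hG]
            show f (pk 0) _ = f _ _
            rw [show pk 0 = a from rfl]
            congr 1
            push_cast [Fin.val_zero]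
            ring
          · show G 1 j0 = _
            rw [hrow3, hval1, hG]
            show f (pk 1) _ = f _ _
            rw [show pk 1 = b from rfl]
            congr 1
            push_cast [Fin.val_zero]
            ring
        · rcases fin2 i1 with rfl | rfl <;> rcases fin2 j1 with rfl | rfl
          · show H 0 0 = _
            rw [hrow2, hval2, hH]
            show f (pk 0) (z + ex 0 * η / 2) = f _ _
            rw [show pk 0 = a from rfl, hex]
            show f a (z + ((n : ℂ) + 1) * η / 2) = _
            congr 1
            push_cast [Fin.val_zero]
            ring
          · show H 0 1 = _
            rw [hrow2, hval3, hH]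
            show f (pk 0) (z + ex 1 * η / 2) = f _ _
            rw [show pk 0 = a from rfl, hex]
            show f a (z + (-((n : ℂ) + 1)) * η / 2) = _
            congr 1
            push_cast [Fin.val_zero]
            ring
          · show H 1 0 = _
            rw [hrow3, hval2, hH]
            show f (pk 1) (z + ex 0 * η / 2) = f _ _
            rw [show pk 1 = b from rfl, hex]
            show f b (z + ((n : ℂ) + 1) * η / 2) = _
            congr 1
            push_cast [Fin.val_zero]
            ring
          · show H 1 1 = _
            rw [hrow3, hval3, hH]
            show f (pk 1) (z + ex 1 * η / 2) = f _ _
            rw [show pk 1 = b from rfl, hex]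
            show f b (z + (-((n : ℂ) + 1)) * η / 2) = _
            congr 1
            push_cast [Fin.val_zero]
            ring
    rw [h1, Matrix.det_permute' π.symm, Matrix.det_submatrix_equiv_self]
    congr 1
    rw [Equiv.Perm.sign_symm, hπ, Fin.sign_cycleRange]
    push_cast
    ring
  have e1 := hplus 0
  have e2 := hminus 1
  have e3 := hplus 1
  have e4 := hminus 0
  rw [show pk 0 = a from rfl] at e1 e4
  rw [show pk 1 = b from rfl] at e2 e3
  rw [e1, e2, e3, e4, hA, hbig]
  linear_combination ((-1 : ℂ)) ^ n * WQQ.dodgson E F G H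
end
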